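/- Let T be any tree of order n ≥ 2 other than the star S_n. Then irr(T) < (n−1)(n−2) = irr(S_n); that is, the star uniquely maximizes the Albertson index among trees on n vertices. -/

import Mathlib

open SimpleGraph Finset

noncomputable instance decAdjInst {V : Type*} (G : SimpleGraph V) : DecidableRel G.Adj :=
  Classical.decRel _

/-- Albertson irregularity index: `∑_{uv ∈ E(G)} |deg u - deg v|`. -/
noncomputable def irr {V : Type*} [Fintype V] (G : SimpleGraph V) : ℕ := by
  classical
  exact ∑ e ∈ G.edgeFinset,
    Sym2.lift ⟨fun u v => ((G.degree u : ℤ) - (G.degree v : ℤ)).natAbs,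
      fun u v => by dsimp only; rw [← Int.natAbs_neg, neg_sub]⟩ e

/-- Sigma index: `∑_{uv ∈ E(G)} (deg u - deg v)^2`. -/
noncomputable def sigmaIdx {V : Type*} [Fintype V] (G : SimpleGraph V) : ℕ := by
  classical
  exact ∑ e ∈ G.edgeFinset,
    Sym2.lift ⟨fun u v => ((G.degree u : ℤ) - (G.degree v : ℤ)).natAbs ^ 2,
      fun u v => by dsimp only; rw [← Int.natAbs_neg, neg_sub]⟩ e

/-
Every edge `uv` of a graph on `n` vertices contributes `|deg u - deg v| ≤ n - 2` to `irr`, since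
both degrees lie in `[1, n - 1]`; the contribution is strictly smaller unless an endpoint is
universal (of degree `n - 1`). A tree has `n - 1` edges, so `irr T < (n - 1)(n - 2)` as soon as
`T` has no universal vertex. If it has one, say `r`, then any further edge would close a triangle
through `r`, so `T` is the star centred at `r`.
-/

namespace SimpleGraph

variable {V : Type*}

def starGraphIsoCompleteBipartiteGraph [DecidableEq V] (r : V) :
    starGraph r ≃g completeBipartiteGraph Unit {v // v ≠ r} where
  toEquiv := (Equiv.sumCompl (· = r)).symm.trans
    (Equiv.sumCongr (Equiv.ofUnique _ _) (Equiv.refl _))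
  map_rel_iff' := by
    intro a b
    by_cases ha : a = r <;> by_cases hb : b = r <;>
      grind [Equiv.sumCompl_symm_apply_of_pos, Equiv.sumCompl_symm_apply_of_neg,
        starGraph_adj, completeBipartiteGraph_adj]

noncomputable def starGraphIsoCompleteBipartiteGraphFin [Fintype V] [DecidableEq V] (r : V) :
    starGraph r ≃g completeBipartiteGraph (Fin 1) (Fin (Fintype.card V - 1)) :=
  (starGraphIsoCompleteBipartiteGraph r).trans <| completeBipartiteGraphCongr
    (Equiv.ofUnique _ _) (Fintype.equivFinOfCardEq (by simp [Fintype.card_subtype_compl]))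

theorem CliqueFree.eq_starGraph_of_isUniversal {G : SimpleGraph V} (hG : G.CliqueFree 3) {r : V}
    (hr : G.IsUniversal r) : G = starGraph r := by
  ext u v
  rw [starGraph_adj]
  refine ⟨fun huv ↦ ⟨huv.ne, ?_⟩, ?_⟩
  · classical
    by_contra! hne
    exact hG {r, u, v} (is3Clique_triple_iff.2 ⟨hr hne.1.symm, hr hne.2.symm, huv⟩)
  · rintro ⟨hne, rfl | rfl⟩
    exacts [hr hne, (hr hne.symm).symm]

variable [Fintype V] {G : SimpleGraph V} [DecidableRel G.Adj]

theorem natAbs_degree_sub_degree_lt_of_not_isUniversal {u v : V} (huv : G.Adj u v)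
    (hu : ¬ G.IsUniversal u) (hv : ¬ G.IsUniversal v) :
    ((G.degree u : ℤ) - G.degree v).natAbs < Fintype.card V - 2 := by
  have hu_lt := (G.degree_lt_card_sub_one u).2 hu
  have hv_lt := (G.degree_lt_card_sub_one v).2 hv
  have hu_pos := G.degree_pos_iff_exists_adj u |>.2 ⟨v, huv⟩
  have hv_pos := G.degree_pos_iff_exists_adj v |>.2 ⟨u, huv.symm⟩
  omega

end SimpleGraph

open SimpleGraph

theorem irr_lt_of_forall_not_isUniversal {V : Type*} [Fintype V] {G : SimpleGraph V}
    (hE : G.edgeFinset.Nonempty) (h : ∀ v, ¬ G.IsUniversal v) :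
    irr G < #G.edgeFinset * (Fintype.card V - 2) := by
  rw [irr, ← smul_eq_mul, ← sum_const]
  refine sum_lt_sum_of_nonempty hE fun e he ↦ ?_
  induction e using Sym2.ind with
  | _ u v =>
    exact natAbs_degree_sub_degree_lt_of_not_isUniversal (G.mem_edgeFinset.1 he) (h u) (h v)

/-- Among trees of order `n ≥ 2`, any tree other than the star `S_n` satisfies
`irr(T) < (n−1)(n−2)`: the star uniquely maximizes the Albertson index. -/
theorem star_unique_max_irr {V : Type*} [Fintype V] (T : SimpleGraph V) (hT : T.IsTree)
    (n : ℕ) (hn : Fintype.card V = n) (h2 : 2 ≤ n)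
    (hnotstar : ¬ Nonempty (T ≃g completeBipartiteGraph (Fin 1) (Fin (n - 1)))) :
    irr T < (n - 1) * (n - 2) := by
  classical
  subst hn
  by_cases huniv : ∀ r, ¬ T.IsUniversal r
  · have hcard : #T.edgeFinset + 1 = Fintype.card V := hT.card_edgeFinset
    have hE : T.edgeFinset.Nonempty := card_pos.1 (by omega)
    have hcard' : #T.edgeFinset = Fintype.card V - 1 := by omega
    simpa only [hcard'] using irr_lt_of_forall_not_isUniversal hE huniv
  · obtain ⟨r, hr⟩ := not_forall_not.1 huniv
    obtain rfl := (hT.isAcyclic.cliqueFree le_rfl).eq_starGraph_of_isUniversal hr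
    exact absurd ⟨starGraphIsoCompleteBipartiteGraphFin r⟩ hnotstar
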